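/- arXiv:1612.00058 — 7 statements merged into one kernel-verified Lean document; each statement's English description precedes it below -/
import Mathlib

section
/- Let p be a prime and G a finite group such that G = ⟨g, H⟩, where g has order dividing p−1 and H is a normal p-subgroup of G. Then there exist r ∈ ℕ and generators h₁, …, h_r of H such that for every 1 ≤ i ≤ r there exists λᵢ ∈ ℤ with g hᵢ g⁻¹ = hᵢ^{λᵢ}. -/
/-!
Conjugation by `g` is an automorphism `σ` of `H` with `σ ^ (p - 1) = 1`, so it suffices to show
that a finite `p`-group `P` is generated by the elements `y` with `σ y ∈ ⟨y⟩`; we induct on `|P|`.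
The elements of order dividing `p` in `Z(P)` form an `𝔽_p`-vector space on which `σ ^ p = σ`;
as `X ^ p - X` splits over `𝔽_p`, `σ` has an eigenvector `x` there. The claim holds in
`P ⧸ ⟨x⟩` by induction, and each `h` with `σ h = h ^ m * x ^ s` (`p ∤ m`) lifts: if `σ x = x ^ a`
with `a ≢ m`, then `h * x ^ t` with `t ≡ s / (m - a)` works; if `a ≡ m`, then iterating `σ`
`p - 1` times gives `x ^ (-s) ∈ ⟨h⟩`, so already `σ h ∈ ⟨h⟩`.
-/

open Subgroup Polynomial

theorem Module.End.exists_hasEigenvalue_of_pow_card_eq_self {K V : Type*} [Field K] [Fintype K]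
    [AddCommGroup V] [Module K V] [FiniteDimensional K V] [Nontrivial V] {f : Module.End K V}
    (hf : f ^ Fintype.card K = f) : ∃ c, f.HasEigenvalue c := by
  have hq : 1 < Fintype.card K := Fintype.one_lt_card
  have hsplit : (X ^ Fintype.card K - X : K[X]).Splits := by
    rw [splits_iff_card_roots, FiniteField.roots_X_pow_card_sub_X,
      FiniteField.X_pow_card_sub_X_natDegree_eq K hq]
    rfl
  have hdvd : minpoly K f ∣ X ^ Fintype.card K - X := minpoly.dvd K f (by simp [hf])
  obtain ⟨c, hc⟩ := (hsplit.of_dvd (FiniteField.X_pow_card_sub_X_ne_zero K hq) hdvd)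
    |>.exists_eval_eq_zero (minpoly.degree_pos (Algebra.IsIntegral.isIntegral f)).ne'
  exact ⟨c, hasEigenvalue_of_isRoot hc⟩

section

variable {p : ℕ}

theorem CommGroup.exists_ne_one_apply_mem_zpowers [hp : Fact p.Prime] {A : Type*} [CommGroup A]
    [Finite A] [Nontrivial A] (hA : ∀ a : A, a ^ p = 1) (τ : Monoid.End A) (hτ : τ ^ p = τ) :
    ∃ a ≠ 1, τ a ∈ zpowers a := by
  have : NeZero p := ⟨hp.out.ne_zero⟩
  let _ : Module (ZMod p) (Additive A) := AddCommGroup.zmodModule (n := p) fun a => hA a.toMul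
  let f : Module.End (ZMod p) (Additive A) := (MonoidHom.toAdditive τ).toZModLinearMap p
  have hf : f ^ p = f := LinearMap.ext fun a => by
    rw [Module.End.pow_apply]
    exact congrFun (congrArg DFunLike.coe hτ) a.toMul
  obtain ⟨c, hc⟩ := f.exists_hasEigenvalue_of_pow_card_eq_self (by rwa [ZMod.card])
  obtain ⟨v, hv⟩ := hc.exists_hasEigenvector
  have hfv := hv.apply_eq_smul
  rw [← ZMod.natCast_zmod_val c, Nat.cast_smul_eq_nsmul] at hfv
  exact ⟨v.toMul, fun h => hv.2 (congrArg Additive.ofMul h),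
    congrArg Additive.toMul hfv ▸ pow_mem (mem_zpowers _) _⟩

variable {P : Type*} [Group P]

theorem MulAut.apply_mem_center (σ : MulAut P) {z : P} (hz : z ∈ center P) : σ z ∈ center P := by
  rwa [← centerCharacteristic.fixed σ] at hz

open scoped IsMulCommutative in
theorem IsPGroup.exists_mem_center_apply_mem_zpowers [hp : Fact p.Prime] [Finite P]
    [Nontrivial P] (hP : IsPGroup p P) (σ : MulAut P) (hσ : σ ^ (p - 1) = 1) :
    ∃ x ∈ center P, x ≠ 1 ∧ x ^ p = 1 ∧ σ x ∈ zpowers x := by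
  let A := (powMonoidHom p : center P →* center P).ker
  have hAp (a : A) : ((a : center P) : P) ^ p = 1 := congrArg Subtype.val a.2
  let τ : Monoid.End A :=
    { toFun a := ⟨⟨σ a, σ.apply_mem_center (a : center P).2⟩, by ext; simp [← map_pow, hAp]⟩
      map_one' := by ext; simp
      map_mul' a b := by ext; simp }
  have hτ_iterate (n : ℕ) (a : A) : ((τ^[n] a : center P) : P) = (σ ^ n) a := by
    induction n with
    | zero => simp
    | succ n ih => rw [Function.iterate_succ_apply', pow_succ', MulAut.mul_apply, ← ih]; rfl
  have hτ : τ ^ p = τ := by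
    ext a
    rw [Monoid.End.coe_pow, hτ_iterate, ← Nat.sub_add_cancel hp.out.one_le, pow_succ, hσ, one_mul]
    rfl
  have : Nontrivial A := by
    obtain ⟨n, hn, hcard⟩ :=
      (hP.to_subgroup (center P)).nontrivial_iff_card.mp hP.center_nontrivial
    obtain ⟨z, hz⟩ :=
      exists_prime_orderOf_dvd_card' (G := center P) p (hcard ▸ dvd_pow_self p hn.ne')
    refine (nontrivial_iff_exists_ne_one A).mpr ⟨z, ?_, ?_⟩
    · rw [MonoidHom.mem_ker, powMonoidHom_apply, ← hz, pow_orderOf_eq_one]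
    · rintro rfl
      exact hp.out.one_lt.ne' (hz ▸ orderOf_one)
  obtain ⟨a, ha1, hτa⟩ :=
    CommGroup.exists_ne_one_apply_mem_zpowers (fun a : A => Subtype.ext a.2) τ hτ
  obtain ⟨k, hk⟩ := mem_zpowers_iff.mp hτa
  refine ⟨a, (a : center P).2, by simpa using ha1, hAp a, k, ?_⟩
  change _ = ((τ a : center P) : P)
  simp [← hk]

theorem zpow_eq_zpow_of_intCast_eq {x : P} (hx : x ^ p = 1) {a b : ℤ}
    (h : (a : ZMod p) = b) : x ^ a = x ^ b :=
  zpow_eq_zpow_iff_modEq.mpr <| ((ZMod.intCast_eq_intCast_iff a b p).mp h).of_dvd <|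
    Int.natCast_dvd_natCast.mpr (orderOf_dvd_of_pow_eq_one hx)

theorem MulAut.pow_apply_of_apply_eq_zpow {σ : MulAut P} {y : P} {m : ℤ} (h : σ y = y ^ m)
    (k : ℕ) : (σ ^ k) y = y ^ m ^ k := by
  induction k with
  | zero => simp
  | succ k ih => rw [pow_succ', MulAut.mul_apply, ih, map_zpow, h, ← zpow_mul, pow_succ']

theorem IsPGroup.intCast_ne_zero_of_apply_eq_zpow [hp : Fact p.Prime] (hP : IsPGroup p P)
    {σ : MulAut P} (hσ : σ ^ (p - 1) = 1) {y : P} (hy : y ≠ 1) {m : ℤ} (h : σ y = y ^ m) :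
    (m : ZMod p) ≠ 0 := by
  intro hm
  have hfix : y ^ (m ^ (p - 1) - 1) = 1 := by
    rw [zpow_sub_one, ← MulAut.pow_apply_of_apply_eq_zpow h, hσ, MulAut.one_apply, mul_inv_cancel]
  obtain ⟨k, hk⟩ := IsPGroup.iff_orderOf.mp hP y
  have hk0 : k ≠ 0 := by
    rintro rfl
    exact hy (orderOf_eq_one_iff.mp (by simpa using hk))
  have hdvd : (p : ℤ) ∣ m ^ (p - 1) - 1 :=
    (Int.natCast_dvd_natCast.mpr ((dvd_pow_self p hk0).trans hk.symm.dvd)).trans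
      (orderOf_dvd_iff_zpow_eq_one.mpr hfix)
  rw [← ZMod.intCast_zmod_eq_zero_iff_dvd] at hdvd
  simp [hm, zero_pow (Nat.sub_ne_zero_of_lt hp.out.one_lt)] at hdvd

theorem MulAut.apply_mem_zpowers_of_apply_eq_zpow_mul [hp : Fact p.Prime] {σ : MulAut P}
    (hσ : σ ^ (p - 1) = 1) {x h : P} (hx : x ^ p = 1) (hxh : Commute x h) {m s : ℤ}
    (hσx : σ x = x ^ m) (hσh : σ h = h ^ m * x ^ s) (hm : (m : ZMod p) ≠ 0) :
    σ h ∈ zpowers h := by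
  have hiter (k : ℕ) : (σ ^ k) h ^ m = h ^ m ^ (k + 1) * x ^ (k * s * m ^ k) := by
    induction k with
    | zero => simp
    | succ k ih =>
      rw [pow_succ', MulAut.mul_apply, ← map_zpow, ih, map_mul, map_zpow, map_zpow, hσh, hσx,
        (hxh.symm.zpow_zpow m s).mul_zpow, ← zpow_mul, ← zpow_mul, ← zpow_mul, mul_assoc,
        ← zpow_add]
      congr 2 <;> push_cast <;> ring
  -- At `k = p - 1` the exponent of `x` is `(p - 1) * s * m ^ (p - 1) ≡ -s` by Fermat.
  have hxs : x ^ (-s) ∈ zpowers h := by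
    have hperiod := hiter (p - 1)
    rw [hσ, MulAut.one_apply, Nat.sub_add_cancel hp.out.one_le,
      zpow_eq_zpow_of_intCast_eq hx (b := -s) (by
        push_cast [Nat.cast_sub hp.out.one_le, ZMod.natCast_self, ZMod.pow_card_sub_one_eq_one hm]
        ring)] at hperiod
    rw [eq_inv_mul_iff_mul_eq.mpr hperiod.symm]
    exact mul_mem (inv_mem (zpow_mem_zpowers h _)) (zpow_mem_zpowers h _)
  rw [hσh]
  exact mul_mem (zpow_mem_zpowers h m) (by simpa using inv_mem hxs)

theorem MulAut.exists_apply_mul_zpow_mem_zpowers [Fact p.Prime] {σ : MulAut P}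
    (hσ : σ ^ (p - 1) = 1) {x h : P} (hx : x ^ p = 1) (hxh : Commute x h) {a m s : ℤ}
    (hσx : σ x = x ^ a) (hσh : σ h = h ^ m * x ^ s) (hm : (m : ZMod p) ≠ 0) :
    ∃ t : ℤ, σ (h * x ^ t) ∈ zpowers (h * x ^ t) := by
  by_cases ham : (a : ZMod p) = m
  · refine ⟨0, ?_⟩
    simpa using apply_mem_zpowers_of_apply_eq_zpow_mul hσ hx hxh
      (hσx.trans (zpow_eq_zpow_of_intCast_eq hx ham)) hσh hm
  · obtain ⟨t, ht⟩ := ZMod.intCast_surjective ((s : ZMod p) / ((m : ZMod p) - (a : ZMod p)))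
    refine ⟨t, mem_zpowers_iff.mpr ⟨m, ?_⟩⟩
    rw [(hxh.symm.zpow_right t).mul_zpow, map_mul, map_zpow, hσh, hσx, ← zpow_mul, ← zpow_mul,
      mul_assoc, ← zpow_add]
    congr 1
    refine zpow_eq_zpow_of_intCast_eq hx ?_
    push_cast
    rw [ht]
    field_simp [sub_ne_zero.mpr (Ne.symm ham)]
    ring

theorem IsPGroup.exists_apply_mem_zpowers_mk_eq [Fact p.Prime] (hP : IsPGroup p P)
    {σ : MulAut P} (hσ : σ ^ (p - 1) = 1) {x : P} (hxZ : x ∈ center P) (hxp : x ^ p = 1)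
    (hσx : σ x ∈ zpowers x) [(zpowers x).Normal] {σ' : MulAut (P ⧸ zpowers x)}
    (hσ' : σ' ^ (p - 1) = 1) (hσσ' : ∀ y : P, σ' y = σ y) {q : P ⧸ zpowers x}
    (hq : σ' q ∈ zpowers q) : ∃ y : P, σ y ∈ zpowers y ∧ (y : P ⧸ zpowers x) = q := by
  obtain ⟨h, rfl⟩ := QuotientGroup.mk_surjective q
  by_cases hh : (h : P ⧸ zpowers x) = 1
  · exact ⟨1, by simp, hh.symm⟩
  obtain ⟨m, hm⟩ := mem_zpowers_iff.mp hq
  have hm0 : (m : ZMod p) ≠ 0 :=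
    (hP.to_quotient _).intCast_ne_zero_of_apply_eq_zpow hσ' hh hm.symm
  obtain ⟨s, hs⟩ : ∃ s : ℤ, x ^ s = (h ^ m)⁻¹ * σ h := by
    rw [← mem_zpowers_iff, ← QuotientGroup.eq, QuotientGroup.mk_zpow, hm, hσσ']
  obtain ⟨a, ha⟩ := mem_zpowers_iff.mp hσx
  obtain ⟨t, ht⟩ := MulAut.exists_apply_mul_zpow_mem_zpowers hσ hxp
    (mem_center_iff.mp hxZ h).symm ha.symm (eq_mul_of_inv_mul_eq hs.symm) hm0
  refine ⟨h * x ^ t, ht, ?_⟩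
  rw [QuotientGroup.mk_mul, (QuotientGroup.eq_one_iff _).mpr (zpow_mem_zpowers x t), mul_one]

theorem MulAut.map_zpowers_eq_of_apply_mem_zpowers [Finite P] (σ : MulAut P) {x : P}
    (h : σ x ∈ zpowers x) : (zpowers x).map σ.toMonoidHom = zpowers x := by
  rw [MonoidHom.map_zpowers]
  refine eq_of_le_of_card_ge (zpowers_le.mpr h) ?_
  rw [Nat.card_zpowers, Nat.card_zpowers]
  exact (MulEquiv.orderOf_eq σ x).ge

theorem IsPGroup.closure_setOf_apply_mem_zpowers_eq_top [Fact p.Prime] [Finite P]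
    (hP : IsPGroup p P) (σ : MulAut P) (hσ : σ ^ (p - 1) = 1) :
    closure {y | σ y ∈ zpowers y} = ⊤ := by
  induction hn : Nat.card P using Nat.strong_induction_on generalizing P with
  | _ n ih =>
  rcases subsingleton_or_nontrivial P with _ | _
  · exact Subsingleton.elim _ _
  obtain ⟨x, hxZ, hx1, hxp, hσx⟩ := hP.exists_mem_center_apply_mem_zpowers σ hσ
  have : (zpowers x).Normal :=
    ⟨fun y hy g => by rwa [mem_center_iff.mp (zpowers_le.mpr hxZ hy) g, mul_inv_cancel_right]⟩
  let σ' :=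
    QuotientGroup.congr (zpowers x) (zpowers x) σ (σ.map_zpowers_eq_of_apply_mem_zpowers hσx)
  have hσσ' (y : P) : σ' y = σ y := QuotientGroup.congr_mk _ _ _ _ y
  have hσ' : σ' ^ (p - 1) = 1 := by
    have hpow (k : ℕ) (y : P) : (σ' ^ k) y = (σ ^ k) y := by
      induction k with
      | zero => rfl
      | succ k ih => rw [pow_succ', MulAut.mul_apply, ih, hσσ', pow_succ', MulAut.mul_apply]
    ext q
    induction q using QuotientGroup.induction_on
    rw [hpow, hσ, MulAut.one_apply, MulAut.one_apply]
  have hcard : Nat.card (P ⧸ zpowers x) < n := by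
    rw [← hn, ← card_mul_index (zpowers x)]
    refine lt_mul_of_one_lt_left Nat.card_pos ?_
    rwa [one_lt_card_iff_ne_bot, Ne, zpowers_eq_bot]
  have htop := ih _ hcard (hP.to_quotient _) σ' hσ' rfl
  have hxK : zpowers x ≤ closure {y | σ y ∈ zpowers y} := zpowers_le.mpr (subset_closure hσx)
  have hmap : (closure {y | σ y ∈ zpowers y}).map (QuotientGroup.mk' (zpowers x)) = ⊤ := by
    rw [eq_top_iff, ← htop, closure_le]
    intro q hq
    obtain ⟨y, hy, rfl⟩ := hP.exists_apply_mem_zpowers_mk_eq hσ hxZ hxp hσx hσ' hσσ' hq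
    exact mem_map_of_mem _ (subset_closure hy)
  rw [← sup_eq_left.mpr hxK, ← QuotientGroup.ker_mk' (zpowers x), ← comap_map_eq, hmap, comap_top]

end

theorem stmt_0_general {G : Type*} [Group G] [Finite G] (p : ℕ) (hp : p.Prime)
    (H : Subgroup G) [H.Normal] (hH : IsPGroup p H)
    (g : G) (hg : orderOf g ∣ p - 1) :
    ∃ (r : ℕ) (h : Fin r → G), (∀ i, h i ∈ H) ∧
      Subgroup.closure (Set.range h) = H ∧
      ∀ i, ∃ l : ℤ, g * h i * g⁻¹ = (h i) ^ l := by
  have : Fact p.Prime := ⟨hp⟩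
  have hσ : MulAut.conjNormal g ^ (p - 1) = (1 : MulAut H) := by
    rw [← map_pow, orderOf_dvd_iff_pow_eq_one.mp hg, map_one]
  obtain ⟨r, e, he⟩ := (Set.toFinite {y : H | MulAut.conjNormal g y ∈ zpowers y}).fin_embedding
  refine ⟨r, fun i => e i, fun i => (e i).2, ?_, fun i => ?_⟩
  · rw [show Set.range (fun i => (e i : G)) = H.subtype '' Set.range e by
      rw [← Set.range_comp]; rfl, he, ← MonoidHom.map_closure,
      hH.closure_setOf_apply_mem_zpowers_eq_top _ hσ, ← MonoidHom.range_eq_map, range_subtype]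
  · obtain ⟨l, hl⟩ := mem_zpowers_iff.mp (he.symm ▸ Set.mem_range_self i :
      e i ∈ {y : H | MulAut.conjNormal g y ∈ zpowers y})
    exact ⟨l, by rw [← MulAut.conjNormal_apply, ← hl, coe_zpow]⟩

theorem stmt_0 {G : Type*} [Group G] [Finite G] (p : ℕ) (hp : p.Prime)
    (H : Subgroup G) [H.Normal] (hH : IsPGroup p H)
    (g : G) (hg : orderOf g ∣ p - 1)
    (hgen : Subgroup.closure ({g} ∪ (H : Set G)) = ⊤) :
    ∃ (r : ℕ) (h : Fin r → G), (∀ i, h i ∈ H) ∧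
      Subgroup.closure (Set.range h) = H ∧
      ∀ i, ∃ l : ℤ, g * h i * g⁻¹ = (h i) ^ l :=
  stmt_0_general p hp H hH g hg
end

section
/- Let G be a group, N a normal subgroup of G, and H a p-Sylow subgroup of G. If g ∈ G is such that its class in G/N normalizes the p-Sylow subgroup HN/N of G/N, then there exists an element of the coset gN which normalizes H. -/
/-!
Frattini argument: `g` normalizes the preimage `HN` of `HN/N`, so `H` and `gHg⁻¹` are Sylow
subgroups of `HN`, conjugate by some `hn ∈ HN`. Then `ng = h⁻¹(hn)g` normalizes `H`, and `ng ∈ gN`.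
-/

open Subgroup

namespace Sylow

variable {G : Type*} [Group G] {p : ℕ}

theorem exists_mem_mul_mem_normalizer_of_le [Fact p.Prime] {P : Sylow p G} {K : Subgroup G}
    [Finite (Sylow p K)] (hP : (P : Subgroup G) ≤ K) {g : G}
    (hgP : ((g • P : Sylow p G) : Subgroup G) ≤ K) :
    ∃ k ∈ K, k * g ∈ normalizer (P : Set G) := by
  obtain ⟨k, hk⟩ := MulAction.exists_smul_eq K ((g • P).subtype hgP) (P.subtype hP)
  simp_rw [smul_subtype, Subgroup.smul_def, smul_smul] at hk
  exact ⟨k, k.2, smul_eq_iff_mem_normalizer.mp (subtype_injective hk)⟩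

theorem smul_le_of_mem_normalizer {P : Sylow p G} {K : Subgroup G}
    (hP : (P : Subgroup G) ≤ K) {g : G} (hg : g ∈ normalizer (K : Set G)) :
    ((g • P : Sylow p G) : Subgroup G) ≤ K := by
  rintro - ⟨x, hx, rfl⟩
  exact (mem_normalizer_iff.mp hg x).mp (hP hx)

end Sylow

namespace Subgroup

variable {G : Type*} [Group G]

theorem exists_mem_mul_mem_normalizer_of_mem_sup {H N : Subgroup G} [N.Normal] {k g : G}
    (hk : k ∈ H ⊔ N) (hkg : k * g ∈ normalizer (H : Set G)) :
    ∃ n ∈ N, n * g ∈ normalizer (H : Set G) := by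
  obtain ⟨h, hh, n, hn, rfl⟩ := mem_sup_of_normal_right.mp hk
  refine ⟨n, hn, ?_⟩
  simpa [mul_assoc] using mul_mem (le_normalizer (inv_mem hh)) hkg

theorem mem_normalizer_sup_of_mk_mem_normalizer_map {H N : Subgroup G} [N.Normal] {g : G}
    (hg : QuotientGroup.mk' N g ∈ normalizer ((H.map (QuotientGroup.mk' N) : Subgroup (G ⧸ N)) :
      Set (G ⧸ N))) :
    g ∈ normalizer ((H ⊔ N : Subgroup G) : Set G) := by
  have := le_normalizer_comap (H := H.map (QuotientGroup.mk' N)) (QuotientGroup.mk' N) hg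
  rwa [comap_map_eq, QuotientGroup.ker_mk'] at this

end Subgroup

theorem stmt_1 {G : Type*} [Group G] [Finite G] {p : ℕ} [Fact p.Prime]
    (N : Subgroup G) [N.Normal] (H : Sylow p G) (g : G)
    (hg : QuotientGroup.mk' N g ∈
      Subgroup.normalizer (((H : Subgroup G).map (QuotientGroup.mk' N) : Subgroup (G ⧸ N)) : Set (G ⧸ N))) :
    ∃ x : G, g⁻¹ * x ∈ N ∧ x ∈ Subgroup.normalizer (((H : Subgroup G) : Set G)) := by
  have hHK : (H : Subgroup G) ≤ (H : Subgroup G) ⊔ N := le_sup_left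
  obtain ⟨k, hk, hkg⟩ := Sylow.exists_mem_mul_mem_normalizer_of_le hHK
    (Sylow.smul_le_of_mem_normalizer hHK (mem_normalizer_sup_of_mk_mem_normalizer_map hg))
  obtain ⟨n, hn, hng⟩ := exists_mem_mul_mem_normalizer_of_mem_sup hk hkg
  refine ⟨n * g, ?_, hng⟩
  simpa [mul_assoc] using ‹N.Normal›.conj_mem' n hn g
end

section
/- Let V = (ℤ/p^nℤ)^{2d} and let G ≤ GL_{2d}(ℤ/p^nℤ) act on V naturally. Suppose G contains an element δ such that δ − Id is a bijection of V. Then the map H¹(G, V[p]) → H¹(G, V) induced by the inclusion V[p] ↪ V is injective with image H¹(G, V)[p]; i.e., it induces an isomorphism H¹(G, V[p]) ≅ H¹(G, V)[p]. -/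
/-- The natural action of an element of `GL_{2d}(ℤ/p^nℤ)` on `(ℤ/p^nℤ)^{2d}`. -/
def mact {p n d : ℕ} (g : Matrix.GeneralLinearGroup (Fin (2*d)) (ZMod (p^n)))
    (v : Fin (2*d) → ZMod (p^n)) : Fin (2*d) → ZMod (p^n) :=
  Matrix.mulVec (g : Matrix (Fin (2*d)) (Fin (2*d)) (ZMod (p^n))) v

lemma mact_sub {p n d : ℕ} (g : Matrix.GeneralLinearGroup (Fin (2*d)) (ZMod (p^n)))
    (v w : Fin (2*d) → ZMod (p^n)) : mact g (v - w) = mact g v - mact g w := by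
  simp [mact, Matrix.mulVec_sub]

lemma mact_nsmul {p n d : ℕ} (g : Matrix.GeneralLinearGroup (Fin (2*d)) (ZMod (p^n)))
    (k : ℕ) (v : Fin (2*d) → ZMod (p^n)) : mact g (k • v) = k • mact g v := by
  have h1 : (k • v) = ((k : ZMod (p^n)) • v) := by
    simp [Nat.cast_smul_eq_nsmul]
  have h2 : (k • mact g v) = ((k : ZMod (p^n)) • mact g v) := by
    simp [Nat.cast_smul_eq_nsmul]
  rw [h1, h2, mact, mact, Matrix.mulVec_smul]

lemma mact_zero {p n d : ℕ} (g : Matrix.GeneralLinearGroup (Fin (2*d)) (ZMod (p^n))) :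
    mact g 0 = 0 := by
  simp [mact]

lemma mact_mul {p n d : ℕ} (a b : Matrix.GeneralLinearGroup (Fin (2*d)) (ZMod (p^n)))
    (v : Fin (2*d) → ZMod (p^n)) : mact (a*b) v = mact a (mact b v) := by
  simp [mact, Matrix.mulVec_mulVec]

theorem stmt_5 (p n d : ℕ) (hp : p.Prime) (hn : 0 < n) (hd : 0 < d)
    (G : Subgroup (Matrix.GeneralLinearGroup (Fin (2*d)) (ZMod (p^n))))
    (δ : G)
    (hδ : Function.Bijective
      (fun v : Fin (2*d) → ZMod (p^n) => mact δ.1 v - v)) :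
    -- injectivity of H¹(G, V[p]) → H¹(G, V):
    (∀ Z : G → (Fin (2*d) → ZMod (p^n)),
      (∀ a b : G, Z (a*b) = Z a + mact a.1 (Z b)) →
      (∀ a : G, p • Z a = 0) →
      (∃ v : Fin (2*d) → ZMod (p^n), ∀ a : G, Z a = mact a.1 v - v) →
      (∃ w : Fin (2*d) → ZMod (p^n), p • w = 0 ∧ ∀ a : G, Z a = mact a.1 w - w)) ∧
    -- the image is exactly the p-torsion H¹(G, V)[p]:
    (∀ Z : G → (Fin (2*d) → ZMod (p^n)),
      (∀ a b : G, Z (a*b) = Z a + mact a.1 (Z b)) →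
      (∃ v : Fin (2*d) → ZMod (p^n), ∀ a : G, p • Z a = mact a.1 v - v) →
      ∃ W : G → (Fin (2*d) → ZMod (p^n)),
        (∀ a b : G, W (a*b) = W a + mact a.1 (W b)) ∧
        (∀ a : G, p • W a = 0) ∧
        (∃ v : Fin (2*d) → ZMod (p^n), ∀ a : G, Z a - W a = mact a.1 v - v)) := by
  constructor
  · rintro Z hcoc hpZ ⟨v, hv⟩
    refine ⟨v, ?_, hv⟩
    have key : mact δ.1 (p • v) - p • v = (0 : Fin (2*d) → ZMod (p^n)) := by
      rw [mact_nsmul, ← smul_sub, ← hv δ, hpZ δ]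
    have h0 : mact δ.1 (0 : Fin (2*d) → ZMod (p^n)) - 0 = 0 := by
      rw [mact_zero, sub_zero]
    exact hδ.injective (key.trans h0.symm)
  · rintro Z hcoc ⟨v, hv⟩
    obtain ⟨u, hu⟩ := hδ.surjective (Z δ)
    simp only at hu
    refine ⟨fun a => Z a - (mact a.1 u - u), ?_, ?_, ⟨u, fun a => by simp only; abel⟩⟩
    · intro a b
      have := hcoc a b
      have hm : mact (a*b).1 u = mact a.1 (mact b.1 u) := mact_mul a.1 b.1 u
      simp only
      rw [hm, this, mact_sub, mact_sub]
      abel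
    · -- p • W a = 0
      intro a
      have hW : ∀ a : G, p • (Z a - (mact a.1 u - u))
          = mact a.1 (v - p • u) - (v - p • u) := by
        intro a
        rw [smul_sub, hv a, smul_sub, mact_sub, mact_nsmul]
        abel
      have hWδ : mact δ.1 (v - p • u) - (v - p • u) = 0 := by
        rw [← hW δ, smul_sub, hu, sub_self]
      have h0 : mact δ.1 (0 : Fin (2*d) → ZMod (p^n)) - 0 = 0 := by
        rw [mact_zero, sub_zero]
      have : v - p • u = 0 := hδ.injective (hWδ.trans h0.symm)
      rw [hW a, this, mact_zero, sub_zero]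
end

section
/- Let δ ∈ GL_{2d}(𝔽_p) have order not divisible by p, with eigenvalues λ₁, …, λ_{2d} (in an algebraic closure). If for all i, j the ratio λᵢ/λⱼ is never an eigenvalue of δ, then the 𝔽_p[⟨δ⟩]-modules V = 𝔽_p^{2d} and End(V) (with δ acting by conjugation) have no common irreducible submodule. -/
/-!
Suppose `S ⊆ V` and `T ⊆ End V` are isomorphic `⟨δ⟩`-modules. The minimal polynomial of `δ` on `S`
then divides both the characteristic polynomial of `δ` on `V` and that of conjugation by `δ` on
`End V`, so over the algebraic closure some `μ` is an eigenvalue of `δ` and there is a matrix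
`X ≠ 0` with `δ X δ⁻¹ = μ X`. As `δ X = μ X δ`, the map `X` sends generalized `λ`-eigenvectors of
`δ` to generalized `μλ`-eigenvectors, and choosing `λ` with `X` nonzero on the generalized
`λ`-eigenspace makes both `λ` and `μλ` eigenvalues. Then `μ = μλ / λ` is a ratio of eigenvalues.
-/

open Polynomial
open scoped Kronecker

namespace Module.End

theorem aeval_comp_eq_comp_aeval {R M N : Type*} [CommSemiring R] [AddCommMonoid M] [Module R M]
    [AddCommMonoid N] [Module R N] {f : End R M} {g : End R N} {m : M →ₗ[R] N}
    (h : g ∘ₗ m = m ∘ₗ f) (q : R[X]) : aeval g q ∘ₗ m = m ∘ₗ aeval f q := by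
  induction q using Polynomial.induction_on' with
  | add p q hp hq => simp only [map_add, LinearMap.add_comp, LinearMap.comp_add, hp, hq]
  | monomial k a =>
    simp only [aeval_monomial, Algebra.algebraMap_eq_smul_one, smul_mul_assoc, one_mul,
      LinearMap.smul_comp, LinearMap.comp_smul, commute_pow_left_of_commute h]

variable {K U V W : Type*} [Field K] [AddCommGroup U] [Module K U] [AddCommGroup V] [Module K V]
  [AddCommGroup W] [Module K W]

theorem minpoly_dvd_of_injective_of_comp_eq {f : End K V} {g : End K W} {m : V →ₗ[K] W}
    (hm : Function.Injective m) (h : g ∘ₗ m = m ∘ₗ f) : minpoly K f ∣ minpoly K g := by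
  refine minpoly.dvd K f (LinearMap.ext fun v => hm ?_)
  have hv := LinearMap.congr_fun (aeval_comp_eq_comp_aeval h (minpoly K g)) v
  rw [minpoly.aeval] at hv
  simpa using hv.symm

theorem not_isCoprime_charpoly_of_injective_comp_eq [Nontrivial U] [FiniteDimensional K V]
    [FiniteDimensional K W] {h : End K U} {f : End K V} {g : End K W}
    {i : U →ₗ[K] V} {j : U →ₗ[K] W} (hi : Function.Injective i) (hj : Function.Injective j)
    (hfi : f ∘ₗ i = i ∘ₗ h) (hgj : g ∘ₗ j = j ∘ₗ h) : ¬ IsCoprime f.charpoly g.charpoly := fun hfg =>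
  minpoly.not_isUnit K h <| hfg.isUnit_of_dvd'
    ((minpoly_dvd_of_injective_of_comp_eq hi hfi).trans (LinearMap.minpoly_dvd_charpoly f))
    ((minpoly_dvd_of_injective_of_comp_eq hj hgj).trans (LinearMap.minpoly_dvd_charpoly g))

theorem exists_hasEigenvalue_mul_of_comp_eq_smul [IsAlgClosed K] [FiniteDimensional K V]
    {f : End K V} {g : End K W} {m : V →ₗ[K] W} {μ : K} (hm : m ≠ 0)
    (h : g ∘ₗ m = μ • (m ∘ₗ f)) : ∃ c, f.HasEigenvalue c ∧ g.HasEigenvalue (μ * c) := by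
  obtain ⟨c, hc⟩ : ∃ c, ¬ f.maxGenEigenspace c ≤ LinearMap.ker m := by
    by_contra! hle
    refine hm (LinearMap.ker_eq_top.mp (eq_top_iff.mpr ?_))
    rw [← iSup_maxGenEigenspace_eq_top f]
    exact iSup_le hle
  obtain ⟨v, hv, hmv⟩ := SetLike.not_le_iff_exists.mp hc
  obtain ⟨k, hk⟩ := (f.mem_maxGenEigenspace c v).mp hv
  have hshift : (g - (μ * c) • 1) ∘ₗ m = m ∘ₗ (μ • (f - c • 1)) := by
    ext x
    have hx : g (m x) = μ • m (f x) := LinearMap.congr_fun h x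
    simp [hx, mul_smul, smul_sub]
  refine ⟨c, hasEigenvalue_of_hasGenEigenvalue (k := k) ?_,
    hasEigenvalue_of_hasGenEigenvalue (k := k) ?_⟩
  · exact (Submodule.ne_bot_iff _).mpr
      ⟨v, mem_genEigenspace_nat.mpr hk, fun hv0 => hmv (by simp [hv0])⟩
  · refine (Submodule.ne_bot_iff _).mpr ⟨m v, mem_genEigenspace_nat.mpr ?_, hmv⟩
    rw [LinearMap.mem_ker, ← LinearMap.comp_apply, commute_pow_left_of_commute hshift k,
      _root_.smul_pow, LinearMap.comp_apply, LinearMap.smul_apply, hk, smul_zero, map_zero]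

end Module.End

namespace Matrix

def vecLinearEquiv (R : Type*) [CommSemiring R] (m n : Type*) :
    Matrix m n R ≃ₗ[R] (n × m → R) where
  toFun := vec
  invFun w := of fun i j => w (j, i)
  map_add' := vec_add
  map_smul' := vec_smul
  left_inv _ := rfl
  right_inv _ := rfl

variable {n : Type*} [Fintype n] [DecidableEq n]

theorem vecLinearEquiv_conj_mulLeftRight {R : Type*} [CommRing R] (A B : Matrix n n R) :
    (vecLinearEquiv R n n).conj (LinearMap.mulLeftRight R (A, B)) = toLin' (Bᵀ ⊗ₖ A) := by
  refine LinearMap.ext fun w => ?_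
  obtain ⟨X, rfl⟩ := (vecLinearEquiv R n n).surjective w
  rw [LinearEquiv.conj_apply_apply, LinearEquiv.symm_apply_apply, toLin'_apply,
    LinearMap.mulLeftRight_apply]
  exact (kronecker_mulVec_vec A X Bᵀ).symm

theorem charpoly_mulLeftRight {R : Type*} [CommRing R] (A B : Matrix n n R) :
    (LinearMap.mulLeftRight R (A, B)).charpoly = (Bᵀ ⊗ₖ A).charpoly := by
  rw [← LinearEquiv.charpoly_conj (vecLinearEquiv R n n), vecLinearEquiv_conj_mulLeftRight,
    charpoly_toLin']

theorem charpoly_mulLeftRight_map {R S : Type*} [CommRing R] [CommRing S] (φ : R →+* S)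
    (A B : Matrix n n R) :
    (LinearMap.mulLeftRight R (A, B)).charpoly.map φ =
      (LinearMap.mulLeftRight S (A.map φ, B.map φ)).charpoly := by
  rw [charpoly_mulLeftRight, charpoly_mulLeftRight, ← charpoly_map]
  congr 1
  ext
  simp

theorem exists_isRoot_charpoly_mul_of_isRoot_charpoly_mulLeftRight {K : Type*} [Field K]
    [IsAlgClosed K] {A B : Matrix n n K} (hBA : B * A = 1) {μ : K}
    (hμ : (LinearMap.mulLeftRight K (A, B)).charpoly.IsRoot μ) :
    ∃ c ≠ 0, A.charpoly.IsRoot c ∧ A.charpoly.IsRoot (μ * c) := by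
  obtain ⟨X, hX⟩ :=
    ((Module.End.hasEigenvalue_iff_isRoot_charpoly _ μ).mpr hμ).exists_hasEigenvector
  have hAXB : A * X * B = μ • X := hX.apply_eq_smul
  have hAX : toLin' A ∘ₗ toLin' X = μ • (toLin' X ∘ₗ toLin' A) := by
    rw [← toLin'_mul, ← toLin'_mul, ← LinearEquiv.map_smul]
    calc toLin' (A * X) = toLin' (A * X * B * A) := by rw [mul_assoc _ B, hBA, mul_one]
      _ = toLin' (μ • (X * A)) := by rw [hAXB, smul_mul_assoc]
  obtain ⟨c, hc, hμc⟩ := Module.End.exists_hasEigenvalue_mul_of_comp_eq_smul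
    (toLin'.map_ne_zero_iff.mpr hX.2) hAX
  rw [Module.End.hasEigenvalue_iff_isRoot_charpoly, charpoly_toLin'] at hc hμc
  refine ⟨c, ?_, hc, hμc⟩
  rintro rfl
  exact (spectrum.zero_mem_iff K).mp (mem_spectrum_iff_isRoot_charpoly.mpr hc)
    (.of_mul_eq_one_right B hBA)

end Matrix

theorem stmt_7_general (p d : ℕ) [Fact p.Prime]
    (δ : Matrix.GeneralLinearGroup (Fin (2*d)) (ZMod p))
    -- no ratio of two eigenvalues (over an algebraic closure) is an eigenvalue:
    (heig : ∀ a b : AlgebraicClosure (ZMod p),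
      (((δ : Matrix (Fin (2*d)) (Fin (2*d)) (ZMod p)).map
          (algebraMap (ZMod p) (AlgebraicClosure (ZMod p)))).charpoly.IsRoot a) →
      (((δ : Matrix (Fin (2*d)) (Fin (2*d)) (ZMod p)).map
          (algebraMap (ZMod p) (AlgebraicClosure (ZMod p)))).charpoly.IsRoot b) →
      ¬ (((δ : Matrix (Fin (2*d)) (Fin (2*d)) (ZMod p)).map
          (algebraMap (ZMod p) (AlgebraicClosure (ZMod p)))).charpoly.IsRoot (a / b))) :
    -- `V` and `End V` have no common irreducible `𝔽_p[⟨δ⟩]`-submodule: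
    ¬ ∃ (S : Submodule (ZMod p) (Fin (2*d) → ZMod p))
        (T : Submodule (ZMod p) (Matrix (Fin (2*d)) (Fin (2*d)) (ZMod p)))
        (hS : ∀ v ∈ S, Matrix.mulVec (δ : Matrix (Fin (2*d)) (Fin (2*d)) (ZMod p)) v ∈ S)
        (_hT : ∀ M ∈ T, (δ : Matrix (Fin (2*d)) (Fin (2*d)) (ZMod p)) * M *
          ((δ⁻¹ : Matrix.GeneralLinearGroup (Fin (2*d)) (ZMod p)) :
            Matrix (Fin (2*d)) (Fin (2*d)) (ZMod p)) ∈ T),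
        S ≠ ⊥ ∧
        (∀ S' : Submodule (ZMod p) (Fin (2*d) → ZMod p), S' ≤ S →
          (∀ v ∈ S', Matrix.mulVec (δ : Matrix (Fin (2*d)) (Fin (2*d)) (ZMod p)) v ∈ S') →
          S' = ⊥ ∨ S' = S) ∧
        T ≠ ⊥ ∧
        (∀ T' : Submodule (ZMod p) (Matrix (Fin (2*d)) (Fin (2*d)) (ZMod p)), T' ≤ T →
          (∀ M ∈ T', (δ : Matrix (Fin (2*d)) (Fin (2*d)) (ZMod p)) * M *
            ((δ⁻¹ : Matrix.GeneralLinearGroup (Fin (2*d)) (ZMod p)) :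
              Matrix (Fin (2*d)) (Fin (2*d)) (ZMod p)) ∈ T') →
          T' = ⊥ ∨ T' = T) ∧
        -- a `δ`-equivariant linear isomorphism between `S` and `T`:
        ∃ e : S ≃ₗ[ZMod p] T, ∀ v : S,
          (e ⟨Matrix.mulVec (δ : Matrix (Fin (2*d)) (Fin (2*d)) (ZMod p)) v.1, hS v.1 v.2⟩ :
              Matrix (Fin (2*d)) (Fin (2*d)) (ZMod p)) =
            (δ : Matrix (Fin (2*d)) (Fin (2*d)) (ZMod p)) * (e v : Matrix (Fin (2*d)) (Fin (2*d)) (ZMod p)) *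
            ((δ⁻¹ : Matrix.GeneralLinearGroup (Fin (2*d)) (ZMod p)) :
              Matrix (Fin (2*d)) (Fin (2*d)) (ZMod p)) := by
  rintro ⟨S, T, hS, -, hSbot, -, -, -, e, he⟩
  have : Nontrivial S := Submodule.nontrivial_iff_ne_bot.mpr hSbot
  set D : Matrix (Fin (2*d)) (Fin (2*d)) (ZMod p) := ↑δ
  set D' : Matrix (Fin (2*d)) (Fin (2*d)) (ZMod p) := ↑δ⁻¹
  have hcommon : ¬ IsCoprime D.charpoly (LinearMap.mulLeftRight (ZMod p) (D, D')).charpoly := by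
    rw [← Matrix.charpoly_toLin']
    exact Module.End.not_isCoprime_charpoly_of_injective_comp_eq
      (h := (Matrix.toLin' D).restrict (p := S) (q := S) hS) (j := T.subtype ∘ₗ e.toLinearMap)
      S.injective_subtype (T.injective_subtype.comp e.injective)
      (LinearMap.ext fun _ => rfl) (LinearMap.ext fun v => (he v).symm)
  obtain ⟨μ, hμV, hμEnd⟩ : ∃ μ : AlgebraicClosure (ZMod p),
      aeval μ D.charpoly = 0 ∧ aeval μ (LinearMap.mulLeftRight (ZMod p) (D, D')).charpoly = 0 := by
    simpa [isCoprime_iff_aeval_ne_zero_of_isAlgClosed (ZMod p) (AlgebraicClosure (ZMod p))]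
      using hcommon
  set φ := algebraMap (ZMod p) (AlgebraicClosure (ZMod p))
  have hD'D : D'.map φ * D.map φ = 1 := by
    rw [← Matrix.map_mul, ← Units.val_mul, inv_mul_cancel, Units.val_one,
      Matrix.map_one _ φ.map_zero φ.map_one]
  obtain ⟨c, hc0, hc, hμc⟩ := Matrix.exists_isRoot_charpoly_mul_of_isRoot_charpoly_mulLeftRight
    hD'D (μ := μ) (by rwa [← Matrix.charpoly_mulLeftRight_map, IsRoot, eval_map_algebraMap])
  have hμ : (D.map φ).charpoly.IsRoot μ := by
    rwa [Matrix.charpoly_map, IsRoot, eval_map_algebraMap]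
  exact heig (μ * c) c hμc hc (by rwa [mul_div_cancel_right₀ μ hc0])

theorem stmt_7 (p d : ℕ) [Fact p.Prime] (hd : 0 < d)
    (δ : Matrix.GeneralLinearGroup (Fin (2*d)) (ZMod p))
    (hord : ¬ p ∣ orderOf δ)
    -- no ratio of two eigenvalues (over an algebraic closure) is an eigenvalue:
    (heig : ∀ a b : AlgebraicClosure (ZMod p),
      (((δ : Matrix (Fin (2*d)) (Fin (2*d)) (ZMod p)).map
          (algebraMap (ZMod p) (AlgebraicClosure (ZMod p)))).charpoly.IsRoot a) →
      (((δ : Matrix (Fin (2*d)) (Fin (2*d)) (ZMod p)).map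
          (algebraMap (ZMod p) (AlgebraicClosure (ZMod p)))).charpoly.IsRoot b) →
      ¬ (((δ : Matrix (Fin (2*d)) (Fin (2*d)) (ZMod p)).map
          (algebraMap (ZMod p) (AlgebraicClosure (ZMod p)))).charpoly.IsRoot (a / b))) :
    -- `V` and `End V` have no common irreducible `𝔽_p[⟨δ⟩]`-submodule:
    ¬ ∃ (S : Submodule (ZMod p) (Fin (2*d) → ZMod p))
        (T : Submodule (ZMod p) (Matrix (Fin (2*d)) (Fin (2*d)) (ZMod p)))
        (hS : ∀ v ∈ S, Matrix.mulVec (δ : Matrix (Fin (2*d)) (Fin (2*d)) (ZMod p)) v ∈ S)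
        (_hT : ∀ M ∈ T, (δ : Matrix (Fin (2*d)) (Fin (2*d)) (ZMod p)) * M *
          ((δ⁻¹ : Matrix.GeneralLinearGroup (Fin (2*d)) (ZMod p)) :
            Matrix (Fin (2*d)) (Fin (2*d)) (ZMod p)) ∈ T),
        S ≠ ⊥ ∧
        (∀ S' : Submodule (ZMod p) (Fin (2*d) → ZMod p), S' ≤ S →
          (∀ v ∈ S', Matrix.mulVec (δ : Matrix (Fin (2*d)) (Fin (2*d)) (ZMod p)) v ∈ S') →
          S' = ⊥ ∨ S' = S) ∧
        T ≠ ⊥ ∧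
        (∀ T' : Submodule (ZMod p) (Matrix (Fin (2*d)) (Fin (2*d)) (ZMod p)), T' ≤ T →
          (∀ M ∈ T', (δ : Matrix (Fin (2*d)) (Fin (2*d)) (ZMod p)) * M *
            ((δ⁻¹ : Matrix.GeneralLinearGroup (Fin (2*d)) (ZMod p)) :
              Matrix (Fin (2*d)) (Fin (2*d)) (ZMod p)) ∈ T') →
          T' = ⊥ ∨ T' = T) ∧
        -- a `δ`-equivariant linear isomorphism between `S` and `T`:
        ∃ e : S ≃ₗ[ZMod p] T, ∀ v : S,
          (e ⟨Matrix.mulVec (δ : Matrix (Fin (2*d)) (Fin (2*d)) (ZMod p)) v.1, hS v.1 v.2⟩ :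
              Matrix (Fin (2*d)) (Fin (2*d)) (ZMod p)) =
            (δ : Matrix (Fin (2*d)) (Fin (2*d)) (ZMod p)) * (e v : Matrix (Fin (2*d)) (Fin (2*d)) (ZMod p)) *
            ((δ⁻¹ : Matrix.GeneralLinearGroup (Fin (2*d)) (ZMod p)) :
              Matrix (Fin (2*d)) (Fin (2*d)) (ZMod p)) :=
  stmt_7_general p d δ heig
end

section
/- Let V = (ℤ/pℤ)^{2d}, G ≤ GL_{2d}(𝔽_p), H a Sylow p-subgroup of G, and N ⊴ G with G/N cyclic of order p−1. Set i = gcd((2d)!, p−1). Then the normalizer of H in G contains an element of order p−1 whose class modulo N has order divisible by (p−1)/i. -/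
/-!
The Sylow subgroup `H` lies in `N` because `G ⧸ N` has order `p - 1`, so by the Frattini argument
some `u` in the normalizer of `H` maps to a generator of `G ⧸ N`. With `m = orderOf u / (p - 1)`,
the element `u ^ m` has order `p - 1` and its image has order `(p - 1) / gcd m (p - 1)`.
If `q ^ c ∣ gcd m (p - 1)`, a power of `u` has order `q ^ (v_q (p - 1) + c)`; a root of an
irreducible factor of its minimal polynomial lives in `𝔽_{p ^ k}` with `k ≤ 2d` and has that
order, so `q ^ (v_q (p - 1) + c) ∣ p ^ k - 1`, and lifting the exponent gives `q ^ c ∣ k ∣ (2d)!`.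
-/

namespace Nat

theorem not_dvd_of_dvd_sub_one {p q : ℕ} (hq : q.Prime) (hp : p ≠ 0) (h : q ∣ p - 1) : ¬ q ∣ p :=
  fun hqp ↦ hq.not_dvd_one <| by
    simpa [Nat.sub_sub_self (Nat.one_le_iff_ne_zero.mpr hp)] using Nat.dvd_sub hqp h

theorem emultiplicity_pow_sub_one {p q : ℕ} (hq : q.Prime) (hp : p ≠ 0) (hqp : q ∣ p - 1)
    (h2 : q = 2 → 4 ∣ p - 1) (k : ℕ) :
    emultiplicity q (p ^ k - 1) = emultiplicity q (p - 1) + emultiplicity q k := by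
  have hq_not_dvd := not_dvd_of_dvd_sub_one hq hp hqp
  obtain rfl | hq2 := eq_or_ne q 2
  · have hp1 : 1 ≤ p := Nat.one_le_iff_ne_zero.mpr hp
    iterate 3 rw [← Int.natCast_emultiplicity]
    push_cast [hp1, Nat.one_le_pow k p (by omega)]
    simpa using Int.two_pow_sub_pow' (y := 1) k (by exact_mod_cast h2 rfl)
      (by exact_mod_cast hq_not_dvd)
  · simpa using Nat.emultiplicity_pow_sub_pow hq (hq.odd_of_ne_two hq2) (y := 1) (by simpa)
      hq_not_dvd k

theorem pow_dvd_of_pow_padicValNat_add_dvd_pow_sub_one {p q c k : ℕ} [hq : Fact q.Prime]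
    (hp : 1 < p) (hc : q ^ c ∣ p - 1)
    (h : q ^ (padicValNat q (p - 1) + c) ∣ p ^ k - 1) : q ^ c ∣ k := by
  obtain rfl | hc0 := eq_or_ne c 0
  · simp
  have hqp : q ∣ p - 1 := (dvd_pow_self q hc0).trans hc
  by_cases h2 : q = 2 → 4 ∣ p - 1
  · rw [pow_dvd_iff_le_emultiplicity, emultiplicity_pow_sub_one hq.out (by omega) hqp h2,
      ← padicValNat_eq_emultiplicity (by omega), Nat.cast_add] at h
    exact pow_dvd_of_le_emultiplicity
      (WithTop.le_of_add_le_add_left (WithTop.natCast_ne_top _) h)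
  · -- `p ≡ 3 mod 4`, where lifting the exponent fails: here `c = 1`, and `k` must be even
    obtain ⟨rfl, h4⟩ := Classical.not_imp.mp h2
    have hc1 : c = 1 := by
      by_contra hc1
      exact h4 ((pow_dvd_pow 2 (by omega : 2 ≤ c)).trans hc)
    subst hc1
    have hv : 1 ≤ padicValNat 2 (p - 1) := one_le_padicValNat_of_dvd (by omega) hqp
    have h4k : 4 ∣ p ^ k - 1 := (pow_dvd_pow 2 (show 2 ≤ _ + 1 by omega)).trans h
    rw [pow_one, ← even_iff_two_dvd]
    by_contra hodd
    obtain ⟨j, rfl⟩ := Nat.not_even_iff_odd.mp hodd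
    have hp3 : p % 4 = 3 := by omega
    have : p ^ (2 * j + 1) % 4 = 3 := by
      rw [Nat.pow_mod, hp3, pow_succ, pow_mul, Nat.mul_mod, Nat.pow_mod]
      norm_num
    omega

end Nat

open Polynomial

theorem Squarefree.exists_irreducible_dvd_not_dvd {R : Type*} [CommMonoidWithZero R]
    [GCDMonoid R] [WfDvdMonoid R] {a b : R} (ha : Squarefree a) (hab : ¬ a ∣ b) :
    ∃ f, Irreducible f ∧ f ∣ a ∧ ¬ f ∣ b := by
  obtain ⟨r, hr⟩ := gcd_dvd_left a b
  have hr_unit : ¬ IsUnit r := fun hu ↦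
    hab ((Units.dvd_mul_right (u := hu.unit)).mp (hr ▸ dvd_rfl) |>.trans (gcd_dvd_right a b))
  have hr0 : r ≠ 0 := by rintro rfl; exact hr_unit (ha 0 (by rw [hr, mul_zero, mul_zero]))
  obtain ⟨f, hf, hfr⟩ := WfDvdMonoid.exists_irreducible_factor hr_unit hr0
  have hfa : f ∣ a := hr ▸ dvd_mul_of_dvd_right hfr _
  refine ⟨f, hf, hfa, fun hfb ↦ hf.not_isUnit (ha f ?_)⟩
  rw [hr]
  exact mul_dvd_mul (dvd_gcd hfa hfb) hfr

theorem Irreducible.pow_dvd_card_pow_natDegree_sub_one {F : Type*} [Field F] [Fintype F]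
    {f : F[X]} (hf : Irreducible f) {q b : ℕ} [Fact q.Prime]
    (h : f ∣ X ^ q ^ (b + 1) - 1) (hb : ¬ f ∣ X ^ q ^ b - 1) :
    q ^ (b + 1) ∣ Fintype.card F ^ f.natDegree - 1 := by
  have := Fact.mk hf
  let K := AdjoinRoot f
  let : Fintype K := Module.fintypeOfFintype (AdjoinRoot.powerBasis hf.ne_zero).basis
  have hcard : Fintype.card K = Fintype.card F ^ f.natDegree := by
    rw [Module.card_eq_pow_finrank (K := F), (AdjoinRoot.powerBasis hf.ne_zero).finrank,
      AdjoinRoot.powerBasis_dim]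
  have root_pow_eq_one {n : ℕ} : AdjoinRoot.root f ^ n = 1 ↔ f ∣ X ^ n - 1 := by
    rw [← AdjoinRoot.mk_eq_zero, map_sub, map_pow, AdjoinRoot.mk_X, map_one, sub_eq_zero]
  have horder : orderOf (AdjoinRoot.root f) = q ^ (b + 1) :=
    orderOf_eq_prime_pow (mt root_pow_eq_one.mp hb) (root_pow_eq_one.mpr h)
  have hroot : AdjoinRoot.root f ≠ 0 := fun h0 ↦ by
    simp only [h0, orderOf_zero] at horder
    exact pow_ne_zero _ (Fact.out : q.Prime).ne_zero horder.symm
  rw [← horder, ← hcard]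
  exact orderOf_dvd_of_pow_eq_one (FiniteField.pow_card_sub_one_eq_one _ hroot)

theorem Matrix.exists_orderOf_dvd_card_pow_sub_one {F : Type*} [Field F] [Fintype F]
    {n : Type*} [Fintype n] [DecidableEq n] {M : Matrix n n F} {q b : ℕ} [hq : Fact q.Prime]
    (hqF : (q : F) ≠ 0) (hb : b ≠ 0) (hM : orderOf M = q ^ b) :
    ∃ k, 0 < k ∧ k ≤ Fintype.card n ∧ orderOf M ∣ Fintype.card F ^ k - 1 := by
  classical
  obtain ⟨b, rfl⟩ := Nat.exists_eq_succ_of_ne_zero hb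
  have hPdvd : minpoly F M ∣ X ^ q ^ (b + 1) - 1 := minpoly.dvd F M (by simp [← hM])
  have hsep : Squarefree (X ^ q ^ (b + 1) - 1 : F[X]) := by
    simpa using (separable_X_pow_sub_C (1 : F) (by simpa) one_ne_zero).squarefree
  have hPnd : ¬ minpoly F M ∣ X ^ q ^ b - 1 := by
    rw [minpoly.dvd_iff]
    simpa [sub_eq_zero] using pow_ne_one_of_lt_orderOf (pow_ne_zero b hq.out.ne_zero)
      (hM ▸ Nat.pow_lt_pow_right hq.out.one_lt b.lt_succ_self)
  obtain ⟨f, hf, hfP, hfnd⟩ := (hsep.squarefree_of_dvd hPdvd).exists_irreducible_dvd_not_dvd hPnd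
  refine ⟨f.natDegree, hf.natDegree_pos, ?_,
    hM ▸ hf.pow_dvd_card_pow_natDegree_sub_one (hfP.trans hPdvd) hfnd⟩
  simpa [M.charpoly_natDegree_eq_dim] using
    natDegree_le_of_dvd (hfP.trans M.minpoly_dvd_charpoly) M.charpoly_monic.ne_zero

theorem Matrix.GeneralLinearGroup.gcd_orderOf_div_dvd_factorial {F : Type*} [Field F]
    [Fintype F] {n : Type*} [Fintype n] [DecidableEq n] (M : GL n F)
    (h : Fintype.card F - 1 ∣ orderOf M) :
    Nat.gcd (orderOf M / (Fintype.card F - 1)) (Fintype.card F - 1) ∣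
      (Fintype.card n).factorial := by
  set r := Fintype.card F
  have hr : 1 < r := Fintype.one_lt_card
  rw [Nat.dvd_iff_prime_pow_dvd_dvd]
  intro q c hq hqc
  have := Fact.mk hq
  obtain rfl | hc0 := eq_or_ne c 0
  · simp
  have hcr : q ^ c ∣ r - 1 := hqc.trans (Nat.gcd_dvd_right _ _)
  have hqF : (q : F) ≠ 0 := fun hq0 ↦ by
    have := Nat.cast_dvd_cast (α := F) ((dvd_pow_self q hc0).trans hcr)
    rw [hq0, zero_dvd_iff, Nat.cast_sub hr.le, FiniteField.cast_card_eq_zero] at this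
    simp at this
  set a := padicValNat q (r - 1) + c
  have ha : q ^ a ∣ orderOf M := by
    rw [pow_add, ← Nat.mul_div_cancel' h]
    exact mul_dvd_mul pow_padicValNat_dvd (hqc.trans (Nat.gcd_dvd_left _ _))
  have hz : orderOf (M ^ (orderOf M / q ^ a)) = q ^ a :=
    orderOf_pow_orderOf_div (orderOf_pos M).ne' ha
  obtain ⟨k, hk0, hkn, hk⟩ := Matrix.exists_orderOf_dvd_card_pow_sub_one hqF (by omega)
    (orderOf_units.trans hz)
  rw [orderOf_units, hz] at hk
  exact (Nat.pow_dvd_of_pow_padicValNat_add_dvd_pow_sub_one hr hcr hk).trans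
    (Nat.dvd_factorial hk0 hkn)

theorem IsPGroup.le_of_coprime_card_quotient {G : Type*} [Group G] {p : ℕ} {P N : Subgroup G}
    [N.Normal] (hP : IsPGroup p P) (h : p.Coprime (Nat.card (G ⧸ N))) : P ≤ N := by
  intro g hg
  rw [← QuotientGroup.eq_one_iff, ← orderOf_eq_one_iff]
  refine Nat.eq_one_of_dvd_coprimes (hP.orderOf_coprime h ⟨g, hg⟩) ?_ (orderOf_dvd_natCard _)
  rw [Subgroup.orderOf_mk]
  exact orderOf_map_dvd (QuotientGroup.mk' N) g

theorem Sylow.exists_mem_normalizer_mk_eq {G : Type*} [Group G] [Finite G] {p : ℕ}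
    [Fact p.Prime] (P : Sylow p G) {N : Subgroup G} [N.Normal] (hP : (P : Subgroup G) ≤ N)
    (g : G ⧸ N) : ∃ u ∈ Subgroup.normalizer (P : Set G), (u : G ⧸ N) = g := by
  obtain ⟨w, rfl⟩ := QuotientGroup.mk_surjective g
  have hw : w ∈ Subgroup.normalizer (P : Set G) ⊔ N := by
    rw [P.normalizer_sup_eq_top' hP]
    exact Subgroup.mem_top w
  obtain ⟨u, hu, v, hv, rfl⟩ := Subgroup.mem_sup_of_normal_right.mp hw
  exact ⟨u, hu, by rw [QuotientGroup.mk_mul, (QuotientGroup.eq_one_iff v).mpr hv, mul_one]⟩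

theorem stmt_11_general (p d : ℕ) [Fact p.Prime]
    (G : Subgroup (Matrix.GeneralLinearGroup (Fin (2*d)) (ZMod p)))
    (H : Sylow p G) (N : Subgroup G) [N.Normal]
    (hquot : Nonempty ((G ⧸ N) ≃* Multiplicative (ZMod (p - 1)))) :
    ∃ x : G, x ∈ Subgroup.normalizer ((H : Subgroup G) : Set G) ∧ orderOf x = p - 1 ∧
      (p - 1) / Nat.gcd (Nat.factorial (2*d)) (p - 1) ∣
        orderOf (QuotientGroup.mk x : G ⧸ N) := by
  obtain ⟨e⟩ := hquot
  have hcard : Nat.card (G ⧸ N) = p - 1 := (Nat.card_congr e.toEquiv).trans (Nat.card_zmod _)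
  have hHN : (H : Subgroup G) ≤ N := H.isPGroup'.le_of_coprime_card_quotient <| hcard ▸
    (Nat.coprime_self_sub_right (Fact.out : p.Prime).one_le).mpr (Nat.coprime_one_right p)
  obtain ⟨g, hg⟩ : ∃ g : G ⧸ N, orderOf g = p - 1 := ⟨e.symm (.ofAdd 1), by
    rw [MulEquiv.orderOf_eq, orderOf_ofAdd_eq_addOrderOf, ZMod.addOrderOf_one]⟩
  obtain ⟨u, hu, rfl⟩ := H.exists_mem_normalizer_mk_eq hHN g
  have hdvd : p - 1 ∣ orderOf u := hg ▸ orderOf_map_dvd (QuotientGroup.mk' N) u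
  refine ⟨u ^ (orderOf u / (p - 1)), pow_mem hu _,
    orderOf_pow_orderOf_div (orderOf_pos u).ne' hdvd, ?_⟩
  have hgcd := (u : GL (Fin (2 * d)) (ZMod p)).gcd_orderOf_div_dvd_factorial
    (by rwa [ZMod.card, Subgroup.orderOf_coe])
  rw [ZMod.card, Fintype.card_fin, Subgroup.orderOf_coe, Nat.gcd_comm] at hgcd
  rw [QuotientGroup.mk_pow, orderOf_pow, hg]
  exact Nat.div_dvd_div_left (Nat.gcd_dvd_right _ _)
    (Nat.dvd_gcd hgcd (Nat.gcd_dvd_left _ _))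

theorem stmt_11 (p d : ℕ) [Fact p.Prime] (hd : 0 < d)
    (G : Subgroup (Matrix.GeneralLinearGroup (Fin (2*d)) (ZMod p)))
    (H : Sylow p G) (N : Subgroup G) [N.Normal]
    (hquot : Nonempty ((G ⧸ N) ≃* Multiplicative (ZMod (p - 1)))) :
    ∃ x : G, x ∈ Subgroup.normalizer ((H : Subgroup G) : Set G) ∧ orderOf x = p - 1 ∧
      (p - 1) / Nat.gcd (Nat.factorial (2*d)) (p - 1) ∣
        orderOf (QuotientGroup.mk x : G ⧸ N) :=
  stmt_11_general p d G H N hquot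
end

section
/- Let p ≡ 2 (mod 3) be prime. The matrix g = [[1, −3], [1, −2]] has order 3 in GL₂(ℤ/p²ℤ), and the set H₂ = { h(a,b) = [[1 + p(a−2b), 3p(b−a)], [−pb, 1 − p(a−2b)]] : a, b ∈ ℤ/p²ℤ } is an abelian subgroup of GL₂(ℤ/p²ℤ) normalized by g, with g h(a,b) g⁻¹ = h(−b, a−b) for all a, b. -/
theorem stmt_16 (p : ℕ) (hp : p.Prime) (h3 : p % 3 = 2)
    (g : Matrix (Fin 2) (Fin 2) (ZMod (p^2)))
    (hg : g = !![1, -3; 1, -2])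
    (h : ZMod (p^2) → ZMod (p^2) → Matrix (Fin 2) (Fin 2) (ZMod (p^2)))
    (hh : ∀ a b : ZMod (p^2),
      h a b = !![1 + (p : ZMod (p^2)) * (a - 2*b), 3 * (p : ZMod (p^2)) * (b - a);
                 -((p : ZMod (p^2)) * b), 1 - (p : ZMod (p^2)) * (a - 2*b)]) :
    -- `g` has order 3:
    orderOf g = 3 ∧
    -- `H₂ = {h(a,b)}` is closed under multiplication, contains inverses, and is abelian:
    (∀ a b a' b' : ZMod (p^2), ∃ a'' b'' : ZMod (p^2), h a b * h a' b' = h a'' b'') ∧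
    (∀ a b : ZMod (p^2), ∃ a' b' : ZMod (p^2), h a b * h a' b' = 1) ∧
    (∀ a b a' b' : ZMod (p^2), h a b * h a' b' = h a' b' * h a b) ∧
    -- `g` normalizes `H₂`, with `g h(a,b) g⁻¹ = h(−b, a−b)` (note `g⁻¹ = g²`):
    (∀ a b : ZMod (p^2), g * h a b * g ^ 2 = h (-b) (a - b)) := by
  have hp2 : (p : ZMod (p^2)) ^ 2 = 0 := by
    have : ((p^2 : ℕ) : ZMod (p^2)) = 0 := ZMod.natCast_self _
    push_cast at this
    linear_combination this
  have hmul : ∀ a b a' b' : ZMod (p^2), h a b * h a' b' = h (a + a') (b + b') := by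
    intro a b a' b'
    rw [hh, hh, hh, Matrix.mul_fin_two]
    ext i j
    fin_cases i <;> fin_cases j <;> simp <;> ring_nf <;> simp [hp2] <;> ring
  have h00 : h 0 0 = 1 := by
    rw [hh]
    ext i j
    fin_cases i <;> fin_cases j <;> simp
  have hord : orderOf g = 3 := by
    have h3' : (3 : ZMod (p^2)) ≠ 0 := by
      intro hc
      have : (p^2 : ℕ) ∣ 3 := by
        have := (ZMod.natCast_eq_zero_iff 3 (p^2)).mp (by exact_mod_cast hc)
        exact this
      have hpd : p ∣ 3 := dvd_trans (dvd_pow_self p two_ne_zero) this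
      have : p = 3 := (Nat.Prime.eq_one_or_self_of_dvd Nat.prime_three p hpd).resolve_left hp.one_lt.ne'
      omega
    have hg3 : g ^ 3 = 1 := by
      rw [hg]
      ext i j
      fin_cases i <;> fin_cases j <;> simp [pow_succ, Matrix.mul_fin_two] <;> ring
    have hgne : g ≠ 1 := by
      intro hc
      rw [hg] at hc
      have := congrFun (congrFun hc 0) 1
      simp [Matrix.one_apply] at this
      exact h3' this
    haveI : Fact (Nat.Prime 3) := ⟨Nat.prime_three⟩
    exact orderOf_eq_prime hg3 hgne
  refine ⟨hord, fun a b a' b' => ⟨a + a', b + b', hmul a b a' b'⟩,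
    fun a b => ⟨-a, -b, by rw [hmul]; simpa using h00⟩,
    fun a b a' b' => by rw [hmul, hmul, add_comm a, add_comm b],
    fun a b => ?_⟩
  rw [hg, hh, hh]
  simp only [pow_two, Matrix.mul_fin_two]
  ext i j
  fin_cases i <;> fin_cases j <;> simp <;> ring_nf
end

section
/- Let p ≡ 2 (mod 3) be prime, and let G₂ = ⟨g, H₂⟩ ≤ GL₂(ℤ/p²ℤ) with g = [[1,−3],[1,−2]] and H₂ = {h(a,b)} as above. The map Z sending h(a,b) to (p(a−2b), p(a−b)) ∈ (ℤ/p²ℤ)², extended to G₂ by Z_g = (0,0) via the cocycle relation, defines a 1-cocycle Z : G₂ → (ℤ/p²ℤ)² which satisfies the local conditions (for every γ ∈ G₂ there is m_γ with Z_γ = γ(m_γ) − m_γ) but is not a coboundary. Hence H¹_loc(G₂, (ℤ/p²ℤ)²) ≠ 0. -/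
/-- The matrix `g = [[1, −3], [1, −2]]` over `ℤ/p²ℤ`. -/
def gmat (p : ℕ) : Matrix (Fin 2) (Fin 2) (ZMod (p^2)) := !![1, -3; 1, -2]

/-- The matrix `h(a,b)` over `ℤ/p²ℤ`. -/
def hmat (p : ℕ) (a b : ZMod (p^2)) : Matrix (Fin 2) (Fin 2) (ZMod (p^2)) :=
  !![1 + (p : ZMod (p^2)) * (a - 2*b), 3 * (p : ZMod (p^2)) * (b - a);
     -((p : ZMod (p^2)) * b), 1 - (p : ZMod (p^2)) * (a - 2*b)]

/-- The subgroup `G₂ = ⟨g, H₂⟩` of `GL₂(ℤ/p²ℤ)`. -/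
def G2 (p : ℕ) : Subgroup (Matrix.GeneralLinearGroup (Fin 2) (ZMod (p^2))) :=
  Subgroup.closure {u | (u : Matrix (Fin 2) (Fin 2) (ZMod (p^2))) = gmat p ∨
    ∃ a b : ZMod (p^2), (u : Matrix (Fin 2) (Fin 2) (ZMod (p^2))) = hmat p a b}

/-!
Every element of `G₂` is `h(a,b) * g ^ k`, and `h(a,b)` only depends on `a, b` mod `p`; reducing
mod `p` kills `H₂` while `g` keeps order `3`, so `k` mod `3` and `h(a,b)` are determined by the
element. Hence `Z(h(a,b) g ^ k) := p • (a - 2b, a - b)` is well defined, and it is a cocycle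
because `g Z(h) = Z(g h g⁻¹)` and `H₂` acts trivially on `p • (ℤ/p²ℤ)²`.

Local conditions: for `3 ∤ k`, `g ^ k - 1` has determinant `3` and is invertible; for `k ≡ 0`
one solves `(h(a,b) - 1) m = Z(h(a,b))` mod `p`, possible because the relevant determinant
`a² - ab + b²` is anisotropic mod `p` when `p ≡ 2 (mod 3)`. Globally, a coboundary
`γ ↦ γ v - v` vanishing at `g` forces `(g - 1) v = 0`, so `v = 0`, contradicting
`Z(h(1,0)) = (p, p) ≠ 0`.
-/

open Matrix

section ZModPrime

variable {p : ℕ}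

lemma three_ne_zero_of_mod_three_eq_two (h3 : p % 3 = 2) : (3 : ZMod p) ≠ 0 := by
  intro h
  have hdvd : p ∣ 3 := (ZMod.natCast_eq_zero_iff 3 p).mp (by exact_mod_cast h)
  have := Nat.le_of_dvd (by norm_num) hdvd
  interval_cases p <;> simp_all

-- Cubing is inverted by `x ↦ x ^ ((2p - 1) / 3)`, since `x ^ (2p - 1) = x` and `3 ∣ 2p - 1`.
lemma pow_three_injective [Fact p.Prime] (h3 : p % 3 = 2) :
    Function.Injective fun x : ZMod p => x ^ 3 := by
  have hroot : ∀ x : ZMod p, (x ^ 3) ^ ((2 * p - 1) / 3) = x := by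
    intro x
    rw [← pow_mul, Nat.mul_div_cancel' (by omega)]
    rcases eq_or_ne x 0 with rfl | hx
    · exact zero_pow (by omega)
    · rw [show 2 * p - 1 = p + (p - 1) by omega, pow_add, ZMod.pow_card,
        ZMod.pow_card_sub_one_eq_one hx, mul_one]
  intro x y hxy
  rw [← hroot x, ← hroot y]
  exact congrArg (· ^ ((2 * p - 1) / 3)) hxy

-- `(a + b)(a² - ab + b²) = a³ + b³`, so `a = -b` and then `3b² = 0`.
lemma eq_zero_of_sq_sub_mul_add_sq_eq_zero [Fact p.Prime] (h3 : p % 3 = 2) {a b : ZMod p}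
    (h : a ^ 2 - a * b + b ^ 2 = 0) : a = 0 ∧ b = 0 := by
  have hab : a = -b := pow_three_injective h3 (by linear_combination (a + b) * h)
  have hb : b = 0 := by
    have h3b : 3 * b ^ 2 = 0 := by rw [hab] at h; linear_combination h
    simpa [three_ne_zero_of_mod_three_eq_two h3] using h3b
  exact ⟨by rw [hab, hb, neg_zero], hb⟩

end ZModPrime

section Matrices

variable (p : ℕ)

def cocycleH (a b : ZMod (p^2)) : Fin 2 → ZMod (p^2) := (p : ZMod (p^2)) • ![a - 2*b, a - b]

lemma natCast_mul_self_eq_zero : (p : ZMod (p^2)) * p = 0 := by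
  rw [← Nat.cast_mul, ← sq, ZMod.natCast_self]

lemma hmat_mul_hmat (a b c d : ZMod (p^2)) :
    hmat p a b * hmat p c d = hmat p (a + c) (b + d) := by
  have hpp := natCast_mul_self_eq_zero p
  ext i j
  fin_cases i <;> fin_cases j <;> simp [hmat]
  · linear_combination (a*c + a*d - 2*b*c + b*d) * hpp
  · linear_combination (-3*a*d + 3*b*c) * hpp
  · linear_combination (a*d - b*c) * hpp
  · linear_combination (a*c - 2*a*d + b*c + b*d) * hpp

lemma hmat_zero_zero : hmat p 0 0 = 1 := by
  simp [hmat, one_fin_two]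

lemma gmat_pow_three : gmat p ^ 3 = 1 := by
  simp only [pow_succ, pow_zero, one_mul, gmat, mul_fin_two, one_fin_two]
  norm_num

lemma gmat_pow_mod_three (k : ℕ) : gmat p ^ (k % 3) = gmat p ^ k := by
  conv_rhs => rw [← Nat.mod_add_div k 3, pow_add, pow_mul, gmat_pow_three, one_pow, mul_one]

lemma gmat_mul_hmat (a b : ZMod (p^2)) :
    gmat p * hmat p a b = hmat p (-b) (a - b) * gmat p := by
  ext i j
  fin_cases i <;> fin_cases j <;> simp [hmat, gmat] <;> ring

lemma hmat_mulVec_natCast_smul (a b : ZMod (p^2)) (v : Fin 2 → ZMod (p^2)) :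
    hmat p a b *ᵥ ((p : ZMod (p^2)) • v) = (p : ZMod (p^2)) • v := by
  have hpp := natCast_mul_self_eq_zero p
  ext i
  fin_cases i <;> simp [hmat, dotProduct, Fin.sum_univ_succ]
  · linear_combination ((a - 2*b) * v 0 + 3*(b - a) * v 1) * hpp
  · linear_combination (-b * v 0 - (a - 2*b) * v 1) * hpp

lemma hmat_mulVec_cocycleH (a b c d : ZMod (p^2)) :
    hmat p a b *ᵥ cocycleH p c d = cocycleH p c d :=
  hmat_mulVec_natCast_smul p a b _

lemma hmat_mulVec_sub (a b : ZMod (p^2)) (m : Fin 2 → ZMod (p^2)) :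
    hmat p a b *ᵥ m - m =
      (p : ZMod (p^2)) • (!![a - 2*b, 3*(b - a); -b, -(a - 2*b)] *ᵥ m) := by
  ext i
  fin_cases i <;> simp [hmat, dotProduct, Fin.sum_univ_succ] <;> ring

lemma gmat_mulVec_cocycleH (a b : ZMod (p^2)) :
    gmat p *ᵥ cocycleH p a b = cocycleH p (-b) (a - b) := by
  ext i
  fin_cases i <;> simp [gmat, cocycleH, mulVec, dotProduct, Fin.sum_univ_succ] <;> ring

lemma cocycleH_add (a b c d : ZMod (p^2)) :
    cocycleH p (a + c) (b + d) = cocycleH p a b + cocycleH p c d := by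
  ext i
  fin_cases i <;> simp [cocycleH] <;> ring

lemma gmat_pow_mul_hmat (k : ℕ) (a b : ZMod (p^2)) :
    ∃ c d, gmat p ^ k * hmat p a b = hmat p c d * gmat p ^ k ∧
      cocycleH p c d = gmat p ^ k *ᵥ cocycleH p a b := by
  induction k generalizing a b with
  | zero => exact ⟨a, b, by simp, by simp⟩
  | succ k ih =>
    obtain ⟨c, d, hcomm, hact⟩ := ih (-b) (a - b)
    refine ⟨c, d, ?_, ?_⟩
    · rw [pow_succ (gmat p), mul_assoc, gmat_mul_hmat, ← mul_assoc, hcomm, mul_assoc]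
    · rw [hact, pow_succ (gmat p), ← mulVec_mulVec, gmat_mulVec_cocycleH]

lemma hmat_mul_gmat_pow_mul_hmat_mul_gmat_pow (a b c d : ZMod (p^2)) (k j : ℕ) :
    ∃ c' d', hmat p a b * gmat p ^ k * (hmat p c d * gmat p ^ j) =
        hmat p (a + c') (b + d') * gmat p ^ (k + j) ∧
      cocycleH p c' d' = gmat p ^ k *ᵥ cocycleH p c d := by
  obtain ⟨c', d', hcomm, hact⟩ := gmat_pow_mul_hmat p k c d
  refine ⟨c', d', ?_, hact⟩
  rw [← hmat_mul_hmat, pow_add, mul_assoc, ← mul_assoc (gmat p ^ k), hcomm]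
  simp only [mul_assoc]

lemma det_gmat_sub_one : (gmat p - 1).det = 3 := by
  simp [gmat, det_fin_two, one_fin_two]

lemma det_gmat_sq_sub_one : (gmat p ^ 2 - 1).det = 3 := by
  simp [gmat, sq, det_fin_two, one_fin_two]; ring

end Matrices

lemma exists_eq_hmat_mul_gmat_pow {p : ℕ} {x : GL (Fin 2) (ZMod (p^2))} (hx : x ∈ G2 p) :
    ∃ ab : ZMod (p^2) × ZMod (p^2), ∃ k : ℕ,
      (x : Matrix (Fin 2) (Fin 2) (ZMod (p^2))) = hmat p ab.1 ab.2 * gmat p ^ k := by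
  induction hx using Subgroup.closure_induction'' with
  | mem x hx =>
    rcases hx with hx | ⟨a, b, hx⟩
    · exact ⟨(0, 0), 1, by rw [hx, hmat_zero_zero, one_mul, pow_one]⟩
    · exact ⟨(a, b), 0, by rw [hx, pow_zero, mul_one]⟩
  | inv_mem x hx =>
    rcases hx with hx | ⟨a, b, hx⟩
    · refine ⟨(0, 0), 2, Units.inv_eq_of_mul_eq_one_left ?_⟩
      rw [hmat_zero_zero, one_mul, hx, ← pow_succ, gmat_pow_three]
    · refine ⟨(-a, -b), 0, Units.inv_eq_of_mul_eq_one_left ?_⟩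
      rw [pow_zero, mul_one, hx, hmat_mul_hmat, neg_add_cancel, neg_add_cancel, hmat_zero_zero]
  | one => exact ⟨(0, 0), 0, by rw [hmat_zero_zero, pow_zero, mul_one, Units.val_one]⟩
  | mul x y _ _ hx hy =>
    obtain ⟨⟨a, b⟩, k, hx⟩ := hx
    obtain ⟨⟨c, d⟩, j, hy⟩ := hy
    obtain ⟨c', d', hxy, -⟩ := hmat_mul_gmat_pow_mul_hmat_mul_gmat_pow p a b c d k j
    exact ⟨(a + c', b + d'), k + j, by rw [Units.val_mul, hx, hy, hxy]⟩

section ReductionModP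

variable {p : ℕ}

def modP (p : ℕ) : ZMod (p^2) →+* ZMod p := ZMod.castHom (dvd_pow_self p two_ne_zero) (ZMod p)

lemma natCast_mul_eq_zero_of_modP_eq_zero {u : ZMod (p^2)} (h : modP p u = 0) :
    (p : ZMod (p^2)) * u = 0 := by
  obtain ⟨n, rfl⟩ := ZMod.intCast_surjective u
  rw [map_intCast, ZMod.intCast_zmod_eq_zero_iff_dvd] at h
  obtain ⟨s, rfl⟩ := h
  push_cast
  rw [← mul_assoc, natCast_mul_self_eq_zero, zero_mul]

lemma isUnit_of_modP_ne_zero [Fact p.Prime] {u : ZMod (p^2)} (h : modP p u ≠ 0) : IsUnit u := by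
  rw [← ZMod.natCast_zmod_val u, ZMod.isUnit_natCast_iff_not_dvd_pow Fact.out two_pos,
    ← ZMod.natCast_eq_zero_iff]
  rwa [← ZMod.natCast_zmod_val u, map_natCast] at h

lemma isUnit_three [Fact p.Prime] (h3 : (3 : ZMod p) ≠ 0) : IsUnit (3 : ZMod (p^2)) :=
  isUnit_of_modP_ne_zero (by rwa [map_ofNat])

lemma mapMatrix_modP_hmat (a b : ZMod (p^2)) : (modP p).mapMatrix (hmat p a b) = 1 := by
  ext i j
  fin_cases i <;> fin_cases j <;> simp [hmat]

lemma orderOf_mapMatrix_modP_gmat (h3 : (3 : ZMod p) ≠ 0) :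
    orderOf ((modP p).mapMatrix (gmat p)) = 3 := by
  refine orderOf_eq_prime ?_ fun h => h3 ?_
  · rw [← map_pow, gmat_pow_three, map_one]
  · simpa [gmat, map_ofNat] using congrFun (congrFun h 0) 1

lemma orderOf_gmat (h3 : (3 : ZMod p) ≠ 0) : orderOf (gmat p) = 3 := by
  refine orderOf_eq_prime (gmat_pow_three p) fun h => ?_
  have := orderOf_mapMatrix_modP_gmat h3
  rw [h, map_one, orderOf_one] at this
  omega

-- Reduction mod `p` kills `h(a,b)`, and `g` has order `3` both mod `p²` and mod `p`, so the
-- reduction determines `g ^ k`.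
lemma hmat_eq_of_hmat_mul_gmat_pow_eq (h3 : (3 : ZMod p) ≠ 0) {a b a' b' : ZMod (p^2)}
    {k k' : ℕ} (h : hmat p a b * gmat p ^ k = hmat p a' b' * gmat p ^ k') :
    hmat p a b = hmat p a' b' := by
  have hfin : IsOfFinOrder (gmat p) := orderOf_pos_iff.mp (by rw [orderOf_gmat h3]; norm_num)
  have hfin' : IsOfFinOrder ((modP p).mapMatrix (gmat p)) :=
    orderOf_pos_iff.mp (by rw [orderOf_mapMatrix_modP_gmat h3]; norm_num)
  have hk : gmat p ^ k = gmat p ^ k' := by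
    rw [hfin.pow_eq_pow_iff_modEq, orderOf_gmat h3, ← orderOf_mapMatrix_modP_gmat h3,
      ← hfin'.pow_eq_pow_iff_modEq, ← map_pow, ← map_pow]
    have hmod := congrArg (modP p).mapMatrix h
    rwa [map_mul, map_mul, mapMatrix_modP_hmat, mapMatrix_modP_hmat, one_mul, one_mul] at hmod
  rwa [hk, (hfin.isUnit.pow k').mul_left_inj] at h

lemma cocycleH_eq_of_hmat_eq {a b a' b' : ZMod (p^2)} (h : hmat p a b = hmat p a' b') :
    cocycleH p a b = cocycleH p a' b' := by
  have h00 := congrFun (congrFun h 0) 0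
  have h10 := congrFun (congrFun h 1) 0
  simp [hmat] at h00 h10
  ext i
  fin_cases i <;> simp [cocycleH]
  · linear_combination h00
  · linear_combination h00 + h10

end ReductionModP

section Cocycle

variable {p : ℕ}

lemma exists_coe_eq_gmat : ∃ x : G2 p, ((x : GL (Fin 2) (ZMod (p^2))) :
    Matrix (Fin 2) (Fin 2) (ZMod (p^2))) = gmat p :=
  ⟨⟨⟨gmat p, gmat p ^ 2, by rw [← pow_succ', gmat_pow_three],
    by rw [← pow_succ, gmat_pow_three]⟩, Subgroup.subset_closure (Or.inl rfl)⟩, rfl⟩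

lemma exists_coe_eq_hmat (a b : ZMod (p^2)) : ∃ x : G2 p, ((x : GL (Fin 2) (ZMod (p^2))) :
    Matrix (Fin 2) (Fin 2) (ZMod (p^2))) = hmat p a b :=
  ⟨⟨⟨hmat p a b, hmat p (-a) (-b), by simp [hmat_mul_hmat, hmat_zero_zero],
    by simp [hmat_mul_hmat, hmat_zero_zero]⟩,
    Subgroup.subset_closure (Or.inr ⟨a, b, rfl⟩)⟩, rfl⟩

-- Read off from any normal form `h(a,b) * g ^ k` of `x`; by `cocycle_eq` the choice is irrelevant.
noncomputable def cocycle (p : ℕ) (x : G2 p) : Fin 2 → ZMod (p^2) :=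
  let ab := (exists_eq_hmat_mul_gmat_pow x.2).choose
  cocycleH p ab.1 ab.2

lemma cocycle_eq (h3 : (3 : ZMod p) ≠ 0) {x : G2 p} {a b : ZMod (p^2)} {k : ℕ}
    (hx : ((x : GL (Fin 2) (ZMod (p^2))) : Matrix (Fin 2) (Fin 2) (ZMod (p^2))) =
      hmat p a b * gmat p ^ k) :
    cocycle p x = cocycleH p a b := by
  obtain ⟨k', hk'⟩ := (exists_eq_hmat_mul_gmat_pow x.2).choose_spec
  exact cocycleH_eq_of_hmat_eq (hmat_eq_of_hmat_mul_gmat_pow_eq h3 (hk'.symm.trans hx))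

lemma cocycle_eq_of_coe_eq_hmat (h3 : (3 : ZMod p) ≠ 0) {x : G2 p} {a b : ZMod (p^2)}
    (hx : ((x : GL (Fin 2) (ZMod (p^2))) : Matrix (Fin 2) (Fin 2) (ZMod (p^2))) = hmat p a b) :
    cocycle p x = cocycleH p a b :=
  cocycle_eq h3 (k := 0) (by rw [hx, pow_zero, mul_one])

lemma cocycle_eq_zero_of_coe_eq_gmat (h3 : (3 : ZMod p) ≠ 0) {x : G2 p}
    (hx : ((x : GL (Fin 2) (ZMod (p^2))) : Matrix (Fin 2) (Fin 2) (ZMod (p^2))) = gmat p) :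
    cocycle p x = 0 := by
  rw [cocycle_eq h3 (a := 0) (b := 0) (k := 1) (by rw [hx, hmat_zero_zero, one_mul, pow_one])]
  simp [cocycleH]

lemma cocycle_mul (h3 : (3 : ZMod p) ≠ 0) (x y : G2 p) :
    cocycle p (x * y) = cocycle p x +
      ((x : GL (Fin 2) (ZMod (p^2))) : Matrix (Fin 2) (Fin 2) (ZMod (p^2))) *ᵥ cocycle p y := by
  obtain ⟨⟨a, b⟩, k, hx⟩ := exists_eq_hmat_mul_gmat_pow x.2
  obtain ⟨⟨c, d⟩, j, hy⟩ := exists_eq_hmat_mul_gmat_pow y.2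
  obtain ⟨c', d', hxy, hact⟩ := hmat_mul_gmat_pow_mul_hmat_mul_gmat_pow p a b c d k j
  rw [cocycle_eq h3 (k := k + j) (by rw [Subgroup.coe_mul, Units.val_mul, hx, hy, hxy]),
    cocycle_eq h3 hx, cocycle_eq h3 hy, cocycleH_add, hx, ← mulVec_mulVec, ← hact,
    hmat_mulVec_cocycleH]

lemma exists_cocycleH_eq_hmat_mulVec_sub [Fact p.Prime] (h3 : p % 3 = 2)
    (a b : ZMod (p^2)) :
    ∃ m, cocycleH p a b = hmat p a b *ᵥ m - m := by
  -- `(h(a,b) - 1) / p` has determinant `-(a² - ab + b²)`, which is anisotropic mod `p`; when it is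
  -- a unit, the witness is its adjugate applied to `(a - 2b, a - b)`, divided by the determinant.
  by_cases hd : modP p (a ^ 2 - a * b + b ^ 2) = 0
  · obtain ⟨ha, hb⟩ := eq_zero_of_sq_sub_mul_add_sq_eq_zero h3 (a := modP p a) (b := modP p b)
      (by simpa using hd)
    have hpa := natCast_mul_eq_zero_of_modP_eq_zero ha
    have hpb := natCast_mul_eq_zero_of_modP_eq_zero hb
    refine ⟨0, ?_⟩
    ext i
    fin_cases i <;> simp [cocycleH]
    · linear_combination hpa - 2 * hpb
    · linear_combination hpa - hpb
  · obtain ⟨e, he⟩ := (isUnit_of_modP_ne_zero hd).exists_left_inv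
    refine ⟨e • ![b ^ 2 + 2 * a * b - 2 * a ^ 2, 2 * a * b - a ^ 2], ?_⟩
    rw [hmat_mulVec_sub, cocycleH]
    congr 1
    ext i
    fin_cases i <;> simp [mulVec, dotProduct, Fin.sum_univ_succ]
    · linear_combination (-(a - 2 * b)) * he
    · linear_combination (-(a - b)) * he

lemma exists_cocycleH_eq_hmat_mul_gmat_pow_mulVec_sub [Fact p.Prime] (h3 : (3 : ZMod p) ≠ 0)
    {k : ℕ} (hk : k % 3 ≠ 0) (a b : ZMod (p^2)) :
    ∃ m, cocycleH p a b = (hmat p a b * gmat p ^ k) *ᵥ m - m := by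
  have hunit : IsUnit (gmat p ^ k - 1) := by
    rw [isUnit_iff_isUnit_det, ← gmat_pow_mod_three]
    rcases (by omega : k % 3 = 1 ∨ k % 3 = 2) with h | h <;>
      simpa [h, det_gmat_sub_one, det_gmat_sq_sub_one] using isUnit_three h3
  -- `h(a,b)` fixes `p • w`, so it suffices to solve `(g ^ k - 1) w = (a - 2b, a - b)`.
  obtain ⟨w, hw⟩ := mulVec_surjective_iff_isUnit.mpr hunit ![a - 2 * b, a - b]
  refine ⟨(p : ZMod (p^2)) • w, ?_⟩
  rw [cocycleH, ← hw, sub_mulVec, one_mulVec, smul_sub, ← mulVec_mulVec, mulVec_smul,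
    hmat_mulVec_natCast_smul]

lemma exists_cocycle_eq_mulVec_sub [Fact p.Prime] (h3 : p % 3 = 2) (γ : G2 p) :
    ∃ m, cocycle p γ =
      ((γ : GL (Fin 2) (ZMod (p^2))) : Matrix (Fin 2) (Fin 2) (ZMod (p^2))) *ᵥ m - m := by
  have h3' := three_ne_zero_of_mod_three_eq_two h3
  obtain ⟨⟨a, b⟩, k, hγ⟩ := exists_eq_hmat_mul_gmat_pow γ.2
  rw [cocycle_eq h3' hγ, hγ]
  by_cases hk : k % 3 = 0
  · rw [← gmat_pow_mod_three, hk, pow_zero, mul_one]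
    exact exists_cocycleH_eq_hmat_mulVec_sub h3 a b
  · exact exists_cocycleH_eq_hmat_mul_gmat_pow_mulVec_sub h3' hk a b

lemma cocycle_not_coboundary [Fact p.Prime] (h3 : (3 : ZMod p) ≠ 0) :
    ¬ ∃ v, ∀ x : G2 p, cocycle p x =
      ((x : GL (Fin 2) (ZMod (p^2))) : Matrix (Fin 2) (Fin 2) (ZMod (p^2))) *ᵥ v - v := by
  rintro ⟨v, hv⟩
  have hv0 : v = 0 := by
    obtain ⟨g, hg⟩ := exists_coe_eq_gmat (p := p)
    have hunit : IsUnit (gmat p - 1) := by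
      rw [isUnit_iff_isUnit_det, det_gmat_sub_one]
      exact isUnit_three h3
    apply mulVec_injective_of_isUnit hunit
    rw [sub_mulVec, one_mulVec, mulVec_zero, ← hg, ← hv g, cocycle_eq_zero_of_coe_eq_gmat h3 hg]
  obtain ⟨h, hh⟩ := exists_coe_eq_hmat (p := p) 1 0
  have hp0 : (p : ZMod (p^2)) = 0 := by
    have := hv h
    rw [hv0, mulVec_zero, sub_zero, cocycle_eq_of_coe_eq_hmat h3 hh] at this
    simpa [cocycleH] using congrFun this 0
  have hp := (Fact.out : p.Prime)
  have hle := Nat.le_of_dvd hp.pos ((ZMod.natCast_eq_zero_iff p (p^2)).mp hp0)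
  nlinarith [hp.two_le]

end Cocycle

theorem stmt_17 (p : ℕ) (hp : p.Prime) (h3 : p % 3 = 2) :
    ∃ Z : G2 p → (Fin 2 → ZMod (p^2)),
      -- `Z` is a 1-cocycle for the natural action of `G₂` on `(ℤ/p²ℤ)²`:
      (∀ x y : G2 p, Z (x * y) =
        Z x + Matrix.mulVec ((x : Matrix.GeneralLinearGroup (Fin 2) (ZMod (p^2))) :
          Matrix (Fin 2) (Fin 2) (ZMod (p^2))) (Z y)) ∧
      -- `Z` vanishes at `g`:
      (∀ x : G2 p, ((x : Matrix.GeneralLinearGroup (Fin 2) (ZMod (p^2))) :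
          Matrix (Fin 2) (Fin 2) (ZMod (p^2))) = gmat p → Z x = 0) ∧
      -- `Z (h(a,b)) = (p(a−2b), p(a−b))`:
      (∀ x : G2 p, ∀ a b : ZMod (p^2),
        ((x : Matrix.GeneralLinearGroup (Fin 2) (ZMod (p^2))) :
          Matrix (Fin 2) (Fin 2) (ZMod (p^2))) = hmat p a b →
        Z x = ![(p : ZMod (p^2)) * (a - 2*b), (p : ZMod (p^2)) * (a - b)]) ∧
      -- `Z` satisfies the local conditions:
      (∀ γ : G2 p, ∃ m : Fin 2 → ZMod (p^2),
        Z γ = Matrix.mulVec ((γ : Matrix.GeneralLinearGroup (Fin 2) (ZMod (p^2))) :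
          Matrix (Fin 2) (Fin 2) (ZMod (p^2))) m - m) ∧
      -- but `Z` is not a coboundary, hence `H¹_loc(G₂, (ℤ/p²ℤ)²) ≠ 0`:
      ¬ ∃ v : Fin 2 → ZMod (p^2), ∀ x : G2 p,
        Z x = Matrix.mulVec ((x : Matrix.GeneralLinearGroup (Fin 2) (ZMod (p^2))) :
          Matrix (Fin 2) (Fin 2) (ZMod (p^2))) v - v := by
  have : Fact p.Prime := ⟨hp⟩
  have h3' := three_ne_zero_of_mod_three_eq_two h3
  refine ⟨cocycle p, cocycle_mul h3', fun x => cocycle_eq_zero_of_coe_eq_gmat h3',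
    fun x a b hx => ?_, exists_cocycle_eq_mulVec_sub h3, cocycle_not_coboundary h3'⟩
  rw [cocycle_eq_of_coe_eq_hmat h3' hx, cocycleH, Matrix.smul_cons, Matrix.smul_cons,
    Matrix.smul_empty, smul_eq_mul, smul_eq_mul]
end
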